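/- Let n ≥ 2, f > 0, and λ₁ ≥ ... ≥ λₙ with Σᵢ arctan(λᵢ/f) ≥ (n-2)π/2 and λₙ < 0. Then for all i < n, λᵢ ≥ -λₙ = |λₙ|. -/
import Mathlib


open Real Finset

theorem stmt_14 (n : ℕ) (hn : 2 ≤ n) (f : ℝ) (hf : 0 < f)
    (lam : Fin n → ℝ) (hmono : Antitone lam)
    (hsum : ((n : ℝ) - 2) * Real.pi / 2 ≤ ∑ i, Real.arctan (lam i / f))
    (hneg : lam ⟨n - 1, by omega⟩ < 0) :
    ∀ i : Fin n, (i : ℕ) < n - 1 → -lam ⟨n - 1, by omega⟩ ≤ lam i := by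
  intro i hi
  set m : Fin n := ⟨n - 1, by omega⟩ with hm
  have hineq : i ≠ m := by
    intro h
    rw [h] at hi
    simp [hm] at hi
  set g : Fin n → ℝ := fun j => Real.arctan (lam j / f) with hg
  have hpair : ({i, m} : Finset (Fin n)) ⊆ univ := subset_univ _
  have hsplit : ∑ j ∈ univ \ {i, m}, g j + ∑ j ∈ ({i, m} : Finset (Fin n)), g j
      = ∑ j, g j := Finset.sum_sdiff hpair
  have hpair_sum : ∑ j ∈ ({i, m} : Finset (Fin n)), g j = g i + g m :=
    Finset.sum_pair hineq
  have hcard : (univ \ ({i, m} : Finset (Fin n))).card = n - 2 := by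
    rw [Finset.card_sdiff_of_subset hpair, Finset.card_pair hineq]
    simp
  have hbound : ∑ j ∈ univ \ {i, m}, g j ≤ ((n : ℝ) - 2) * (Real.pi / 2) := by
    calc ∑ j ∈ univ \ {i, m}, g j
        ≤ (univ \ ({i, m} : Finset (Fin n))).card • (Real.pi / 2) :=
          Finset.sum_le_card_nsmul _ _ _ (fun j _ => (Real.arctan_lt_pi_div_two _).le)
      _ = ((n : ℝ) - 2) * (Real.pi / 2) := by
          rw [hcard, nsmul_eq_mul, Nat.cast_sub hn]
          norm_num
  have hkey : 0 ≤ g i + g m := by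
    have := hsum
    rw [← hsplit, hpair_sum] at this
    nlinarith [this, hbound]
  have : Real.arctan (-(lam m) / f) ≤ Real.arctan (lam i / f) := by
    rw [neg_div, Real.arctan_neg]
    linarith [hkey]
  have h2 : -(lam m) / f ≤ lam i / f := Real.arctan_strictMono.le_iff_le.mp this
  have := (div_le_div_iff_of_pos_right hf).mp h2
  linarith [this]
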